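/- Let a>0, b>0, c≥−1/b, φ₀∈ℝ, and let k∈ℂ with k≠0. There exists a twice continuously differentiable function ψ:[-a,a]→ℂ, not identically zero, with −ψ″(x)=k²ψ(x) for all x∈[-a,a], ψ(a)=√(1+bc)·e^{iφ₀}·ψ(−a)+b·ψ′(−a) and ψ′(a)=c·ψ(−a)+√(1+bc)·e^{−iφ₀}·ψ′(−a), if and only if −2k + 2k·cos(2ak)·√(1+bc)·cos(φ₀) + (bk²−c)·sin(2ak) = 0. -/

import Mathlib

/-- A nontrivial twice continuously differentiable solution of `-ψ'' = k²ψ`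
on `[-a, a]` with connected PT-symmetric boundary conditions given by
parameters `(b, c, φ₀)`. -/
def IsConnectedSol (a b c φ₀ : ℝ) (k : ℂ) (ψ : ℝ → ℂ) : Prop :=
  ∃ ψ' ψ'' : ℝ → ℂ,
    (∀ x ∈ Set.Icc (-a) a, HasDerivAt ψ (ψ' x) x) ∧
    (∀ x ∈ Set.Icc (-a) a, HasDerivAt ψ' (ψ'' x) x) ∧
    ContinuousOn ψ'' (Set.Icc (-a) a) ∧
    (∃ x ∈ Set.Icc (-a) a, ψ x ≠ 0) ∧
    (∀ x ∈ Set.Icc (-a) a, -ψ'' x = k ^ 2 * ψ x) ∧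
    ψ a = ((Real.sqrt (1 + b * c) : ℝ) : ℂ) * Complex.exp (Complex.I * (φ₀ : ℂ)) * ψ (-a)
      + (b : ℂ) * ψ' (-a) ∧
    ψ' a = (c : ℂ) * ψ (-a)
      + ((Real.sqrt (1 + b * c) : ℝ) : ℂ) * Complex.exp (-(Complex.I * (φ₀ : ℂ))) * ψ' (-a)

/-!
A solution of `-ψ'' = k²ψ` is determined by its Cauchy data `Ψ(-a) = (ψ(-a), ψ'(-a))`, and it
carries them to `Ψ(a) = T Ψ(-a)`, where `T` is the transfer matrix with rows
`(cos 2ak, sin 2ak / k)` and `(-k sin 2ak, cos 2ak)`. The boundary condition `Ψ(a) = B Ψ(-a)` thus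
says that `Ψ(-a)` is a nonzero kernel vector of `T - B`, so a nontrivial solution exists iff
`det (T - B) = 0`. Since `det T = det B = 1`, one finds
`k · det (T - B) = 2k - 2k cos(2ak) √(1+bc) cos φ₀ - (bk² - c) sin(2ak)`.
-/

open Complex Matrix Set

/-- The propagator of `-ψ'' = k²ψ` over a distance `t`, acting on Cauchy data `![ψ, ψ']`. -/
noncomputable def transferMatrix (k : ℂ) (t : ℝ) : Matrix (Fin 2) (Fin 2) ℂ :=
  !![cos (k * t), sin (k * t) / k; -(k * sin (k * t)), cos (k * t)]

noncomputable def connectedBCMatrix (b c φ₀ : ℝ) : Matrix (Fin 2) (Fin 2) ℂ :=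
  !![((√(1 + b * c) : ℝ) : ℂ) * exp (I * φ₀), b; c, ((√(1 + b * c) : ℝ) : ℂ) * exp (-(I * φ₀))]

lemma transferMatrix_mulVec (k : ℂ) (t : ℝ) (v : Fin 2 → ℂ) :
    transferMatrix k t *ᵥ v =
      ![cos (k * t) * v 0 + sin (k * t) / k * v 1, -(k * sin (k * t)) * v 0 + cos (k * t) * v 1] := by
  ext i; fin_cases i <;> simp [transferMatrix, mulVec, dotProduct, Fin.sum_univ_two]

lemma connectedBCMatrix_mulVec (b c φ₀ : ℝ) (v : Fin 2 → ℂ) :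
    connectedBCMatrix b c φ₀ *ᵥ v =
      ![((√(1 + b * c) : ℝ) : ℂ) * exp (I * φ₀) * v 0 + b * v 1,
        c * v 0 + ((√(1 + b * c) : ℝ) : ℂ) * exp (-(I * φ₀)) * v 1] := by
  ext i; fin_cases i <;> simp [connectedBCMatrix, mulVec, dotProduct, Fin.sum_univ_two]

lemma det_transferMatrix {k : ℂ} (hk : k ≠ 0) (t : ℝ) : (transferMatrix k t).det = 1 := by
  rw [transferMatrix, det_fin_two_of]
  field_simp
  linear_combination sin_sq_add_cos_sq (k * t)

@[simp]
lemma transferMatrix_zero (k : ℂ) : transferMatrix k 0 = 1 := by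
  simp [transferMatrix, one_fin_two]

theorem mul_det_transferMatrix_sub_connectedBCMatrix {b c : ℝ} (hbc : 0 ≤ 1 + b * c) (φ₀ : ℝ)
    {k : ℂ} (hk : k ≠ 0) (t : ℝ) :
    k * (transferMatrix k t - connectedBCMatrix b c φ₀).det =
      -(-(2 * k) + 2 * k * cos (k * t) * ((√(1 + b * c) * Real.cos φ₀ : ℝ) : ℂ)
        + (b * k ^ 2 - c) * sin (k * t)) := by
  have hs : ((√(1 + b * c) : ℝ) : ℂ) ^ 2 = 1 + b * c := by
    norm_cast; exact Real.sq_sqrt hbc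
  have hcos : exp (I * φ₀) + exp (-(I * φ₀)) = 2 * cos φ₀ := by
    rw [two_cos]; ring_nf
  have hexp : exp (I * φ₀) * exp (-(I * φ₀)) = 1 := by
    rw [← exp_add, add_neg_cancel, exp_zero]
  rw [det_fin_two]
  simp only [transferMatrix, connectedBCMatrix, Matrix.sub_apply, of_apply, cons_val', cons_val_zero,
    cons_val_one, empty_val', cons_val_fin_one]
  push_cast
  field_simp
  linear_combination k * sin_sq_add_cos_sq (k * t) - k * cos (k * t) * ((√(1 + b * c) : ℝ) : ℂ) * hcos
    + k * ((√(1 + b * c) : ℝ) : ℂ) ^ 2 * hexp + k * hs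

lemma hasDerivAt_cos_mul_sub (k : ℂ) (p x : ℝ) :
    HasDerivAt (fun x : ℝ => cos (k * ↑(x - p))) (-(k * sin (k * ↑(x - p)))) x := by
  have h := ((hasDerivAt_id x).sub_const p).ofReal_comp.const_mul k
  exact ((hasDerivAt_cos _).comp x h).congr_deriv (by simp [mul_comm])

lemma hasDerivAt_sin_mul_sub (k : ℂ) (p x : ℝ) :
    HasDerivAt (fun x : ℝ => sin (k * ↑(x - p))) (k * cos (k * ↑(x - p))) x := by
  have h := ((hasDerivAt_id x).sub_const p).ofReal_comp.const_mul k
  exact ((hasDerivAt_sin _).comp x h).congr_deriv (by simp [mul_comm])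

lemma eq_left_of_hasDerivAt_zero {E : Type*} [NormedAddCommGroup E] [NormedSpace ℝ E]
    {f : ℝ → E} {p q : ℝ} (hf : ∀ x ∈ Icc p q, HasDerivAt f 0 x) :
    ∀ x ∈ Icc p q, f x = f p :=
  constant_of_has_deriv_right_zero (fun x hx => (hf x hx).continuousAt.continuousWithinAt)
    fun x hx => (hf x (Ico_subset_Icc_self hx)).hasDerivWithinAt

lemma hasDerivAt_transferMatrix_mulVec_zero {k : ℂ} (hk : k ≠ 0) (p : ℝ) (v : Fin 2 → ℂ) (x : ℝ) :
    HasDerivAt (fun x => (transferMatrix k (x - p) *ᵥ v) 0) ((transferMatrix k (x - p) *ᵥ v) 1) x := by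
  simp only [transferMatrix_mulVec, cons_val_zero, cons_val_one]
  refine (((hasDerivAt_cos_mul_sub k p x).mul_const (v 0)).add
    (((hasDerivAt_sin_mul_sub k p x).div_const k).mul_const (v 1))).congr_deriv ?_
  field_simp

lemma hasDerivAt_transferMatrix_mulVec_one {k : ℂ} (hk : k ≠ 0) (p : ℝ) (v : Fin 2 → ℂ) (x : ℝ) :
    HasDerivAt (fun x => (transferMatrix k (x - p) *ᵥ v) 1)
      (-k ^ 2 * (transferMatrix k (x - p) *ᵥ v) 0) x := by
  simp only [transferMatrix_mulVec, cons_val_zero, cons_val_one]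
  refine ((((hasDerivAt_sin_mul_sub k p x).const_mul k).neg.mul_const (v 0)).add
    ((hasDerivAt_cos_mul_sub k p x).mul_const (v 1))).congr_deriv ?_
  field_simp
  ring

theorem vec_eq_transferMatrix_mulVec {p q : ℝ} {k : ℂ} (hk : k ≠ 0) {ψ ψ' ψ'' : ℝ → ℂ}
    (hψ : ∀ x ∈ Icc p q, HasDerivAt ψ (ψ' x) x) (hψ' : ∀ x ∈ Icc p q, HasDerivAt ψ' (ψ'' x) x)
    (hode : ∀ x ∈ Icc p q, -ψ'' x = k ^ 2 * ψ x) {x : ℝ} (hx : x ∈ Icc p q) :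
    ![ψ x, ψ' x] = transferMatrix k (x - p) *ᵥ ![ψ p, ψ' p] := by
  set C : ℝ → ℂ := fun x => cos (k * ↑(x - p))
  set S : ℝ → ℂ := fun x => sin (k * ↑(x - p))
  -- the rows of `transferMatrix k (p - y) *ᵥ ![ψ y, ψ' y]` are conserved
  have hA : ∀ y ∈ Icc p q, HasDerivAt (fun y => C y * ψ y - S y / k * ψ' y) 0 y := fun y hy =>
    (((hasDerivAt_cos_mul_sub k p y).mul (hψ y hy)).sub
      (((hasDerivAt_sin_mul_sub k p y).div_const k).mul (hψ' y hy))).congr_deriv (by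
        field_simp
        linear_combination S y * hode y hy)
  have hB : ∀ y ∈ Icc p q, HasDerivAt (fun y => k * S y * ψ y + C y * ψ' y) 0 y := fun y hy =>
    ((((hasDerivAt_sin_mul_sub k p y).const_mul k).mul (hψ y hy)).add
      ((hasDerivAt_cos_mul_sub k p y).mul (hψ' y hy))).congr_deriv (by
        linear_combination -C y * hode y hy)
  have hA' := eq_left_of_hasDerivAt_zero hA x hx
  have hB' := eq_left_of_hasDerivAt_zero hB x hx
  simp only [C, S, sub_self, ofReal_zero, mul_zero, cos_zero, sin_zero, zero_div, one_mul,
    zero_mul, sub_zero, zero_add] at hA' hB'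
  field_simp at hA'
  have hCS := sin_sq_add_cos_sq (k * ↑(x - p))
  rw [transferMatrix_mulVec]
  ext i; fin_cases i
  · simp only [Fin.zero_eta, cons_val_zero, cons_val_one]
    field_simp
    linear_combination cos (k * ↑(x - p)) * hA' + sin (k * ↑(x - p)) * hB' - k * ψ x * hCS
  · simp only [Fin.mk_one, cons_val_one, cons_val_zero]
    linear_combination -sin (k * ↑(x - p)) * hA' + cos (k * ↑(x - p)) * hB' - ψ' x * hCS

theorem IsConnectedSol.exists_mulVec_eq_zero {a b c φ₀ : ℝ} {k : ℂ} (hk : k ≠ 0) {ψ : ℝ → ℂ}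
    (h : IsConnectedSol a b c φ₀ k ψ) :
    ∃ v ≠ 0, (transferMatrix k (a - -a) - connectedBCMatrix b c φ₀) *ᵥ v = 0 := by
  obtain ⟨ψ', ψ'', hψ, hψ', -, ⟨x₀, hx₀, hψx₀⟩, hode, hbc₁, hbc₂⟩ := h
  have hT {x} (hx : x ∈ Icc (-a) a) := vec_eq_transferMatrix_mulVec hk hψ hψ' hode hx
  refine ⟨![ψ (-a), ψ' (-a)], fun hv => hψx₀ ?_, ?_⟩
  · simpa [hv] using congr_fun (hT hx₀) 0
  · rw [sub_mulVec, ← hT ⟨hx₀.1.trans hx₀.2, le_rfl⟩, connectedBCMatrix_mulVec]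
    simp only [cons_val_zero, cons_val_one, ← hbc₁, ← hbc₂, sub_self]

theorem isConnectedSol_transferMatrix_mulVec {a b c φ₀ : ℝ} (ha : 0 < a) {k : ℂ} (hk : k ≠ 0)
    {v : Fin 2 → ℂ} (hv : v ≠ 0)
    (hBv : (transferMatrix k (a - -a) - connectedBCMatrix b c φ₀) *ᵥ v = 0) :
    IsConnectedSol a b c φ₀ k fun x => (transferMatrix k (x - -a) *ᵥ v) 0 := by
  have hψ := hasDerivAt_transferMatrix_mulVec_zero hk (-a) v
  have hψ' := hasDerivAt_transferMatrix_mulVec_one hk (-a) v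
  have hcont : Continuous fun x => (transferMatrix k (x - -a) *ᵥ v) 0 :=
    continuous_iff_continuousAt.2 fun x => (hψ x).continuousAt
  rw [sub_mulVec, sub_eq_zero, connectedBCMatrix_mulVec] at hBv
  refine ⟨_, _, fun x _ => hψ x, fun x _ => hψ' x, (continuous_const.mul hcont).continuousOn,
    ?_, fun x _ => by ring, ?_, ?_⟩
  · by_contra! hzero
    have h0 : (0 : ℝ) ∈ Ioo (-a) a := ⟨neg_lt_zero.2 ha, ha⟩
    have hderiv0 := (hψ 0).unique <| (hasDerivAt_const (0 : ℝ) (0 : ℂ)).congr_of_eventuallyEq <|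
      Filter.eventuallyEq_of_mem (Icc_mem_nhds h0.1 h0.2) hzero
    refine hv (eq_zero_of_mulVec_eq_zero (M := transferMatrix k (0 - -a)) ?_ ?_)
    · rw [det_transferMatrix hk]; exact one_ne_zero
    · ext i; fin_cases i
      exacts [hzero 0 (Ioo_subset_Icc_self h0), hderiv0]
  · simpa using congr_fun hBv 0
  · simpa using congr_fun hBv 1

/-- the eigenvalue equation
`-2k + 2k cos(2ak) √(1+bc) cos φ₀ + (bk² - c) sin(2ak) = 0` characterizes the
eigenvalues `λ = k²` of the zero-curvature Hamiltonian with connected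
PT-symmetric boundary conditions. -/
theorem pt_connected_eigenvalue_equation
    (a b c φ₀ : ℝ) (ha : 0 < a) (hb : 0 < b) (hc : -(1 / b) ≤ c)
    (k : ℂ) (hk : k ≠ 0) :
    (∃ ψ : ℝ → ℂ, IsConnectedSol a b c φ₀ k ψ) ↔
      -(2 * k) + 2 * k * Complex.cos (2 * (a : ℂ) * k)
          * ((Real.sqrt (1 + b * c) * Real.cos φ₀ : ℝ) : ℂ)
        + ((b : ℂ) * k ^ 2 - (c : ℂ)) * Complex.sin (2 * (a : ℂ) * k) = 0 := by
  have hbc : 0 ≤ 1 + b * c := by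
    have := mul_le_mul_of_nonneg_left hc hb.le
    rw [mul_neg, mul_one_div_cancel hb.ne'] at this
    linarith
  have hdet := mul_det_transferMatrix_sub_connectedBCMatrix hbc φ₀ hk (a - -a)
  rw [show k * ((a - -a : ℝ) : ℂ) = 2 * a * k by push_cast; ring] at hdet
  calc (∃ ψ, IsConnectedSol a b c φ₀ k ψ)
      ↔ ∃ v ≠ 0, (transferMatrix k (a - -a) - connectedBCMatrix b c φ₀) *ᵥ v = 0 :=
        ⟨fun ⟨_, hψ⟩ => hψ.exists_mulVec_eq_zero hk,
          fun ⟨_, hv, hBv⟩ => ⟨_, isConnectedSol_transferMatrix_mulVec ha hk hv hBv⟩⟩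
    _ ↔ (transferMatrix k (a - -a) - connectedBCMatrix b c φ₀).det = 0 := exists_mulVec_eq_zero_iff
    _ ↔ _ := by rw [← mul_right_inj' hk, hdet, mul_zero, neg_eq_zero]
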